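/- arXiv:1805.03535 — 4 statements merged into one kernel-verified Lean document; each statement's English description precedes it below -/
import Mathlib

section
/- Let 0 < c_L < c_H < 1 and let p, m ∈ (0,1). Then the normalized energy-per-information ratio is minimized exactly when m = p: (i) if m < p then (p/m)·J(c_L, c_H, m) > J(c_L, c_H, p); (ii) if m > p then ((1−p)/(1−m))·J(c_L, c_H, m) > J(c_L, c_H, p); (iii) if m = p then the corresponding ratio (p/m)·J(c_L, c_H, m) equals J(c_L, c_H, p). (This is Theorem 1 of the paper: the minimum free energy per nat of the minimal molecular communication system is the Landauer energy kT, achieved when the reservoir fraction m equals the codebook probability p.) -/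
/-!
`J cL cH` vanishes at `0` and `1` and is strictly concave on `[0, 1]`: its `φ` term is
`x ↦ x log x` composed with the injective affine map `p ↦ p cL + (1 - p) cH`, and the rest is
affine. Hence the slope of the chord from `0` to `p`, namely `J p / p`, is strictly decreasing
in `p`, which is (i); the chord from `p` to `1`, of slope `-J p / (1 - p)`, gives (ii).
-/

/-- Partial entropy function: φ(p) = p·log p for p > 0, φ(0) = 0. -/
noncomputable def phi (p : ℝ) : ℝ := if 0 < p then p * Real.log p else 0

/-- J(c_L, c_H, p) = p·φ(c_L) + (1−p)·φ(c_H) − φ(p·c_L + (1−p)·c_H). -/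
noncomputable def J (cL cH p : ℝ) : ℝ :=
  p * phi cL + (1 - p) * phi cH - phi (p * cL + (1 - p) * cH)

open Real Set

lemma phi_of_nonneg {x : ℝ} (hx : 0 ≤ x) : phi x = x * log x := by
  rcases hx.lt_or_eq with hx | rfl
  · exact if_pos hx
  · simp [phi]

@[simp] lemma J_zero (cL cH : ℝ) : J cL cH 0 = 0 := by simp [J]

@[simp] lemma J_one (cL cH : ℝ) : J cL cH 1 = 0 := by simp [J]

lemma strictConcaveOn_J {cL cH : ℝ} (hcL : 0 ≤ cL) (hcH : 0 ≤ cH) (hLH : cL ≠ cH) :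
    StrictConcaveOn ℝ (Icc 0 1) (J cL cH) := by
  set mix : ℝ → ℝ := fun z ↦ z * cL + (1 - z) * cH with hmix
  have mix_nonneg : ∀ z ∈ Icc (0 : ℝ) 1, 0 ≤ mix z := fun z ⟨hz0, hz1⟩ ↦
    add_nonneg (mul_nonneg hz0 hcL) (mul_nonneg (sub_nonneg.2 hz1) hcH)
  have J_eq : ∀ z ∈ Icc (0 : ℝ) 1,
      J cL cH z = z * phi cL + (1 - z) * phi cH - mix z * log (mix z) :=
    fun z hz ↦ by rw [J, phi_of_nonneg (mix_nonneg z hz)]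
  refine ⟨convex_Icc 0 1, fun x hx y hy hxy u v hu hv huv ↦ ?_⟩
  have mix_ne : mix x ≠ mix y := fun h ↦ hxy <|
    mul_left_cancel₀ (sub_ne_zero.2 hLH) (by simp only [hmix] at h; linarith)
  have mix_comb : mix (u • x + v • y) = u • mix x + v • mix y := by
    simp only [hmix, smul_eq_mul]; linear_combination -cH * huv
  have key := strictConvexOn_mul_log.2 (mix_nonneg x hx) (mix_nonneg y hy) mix_ne hu hv huv
  rw [smul_eq_mul, smul_eq_mul, J_eq x hx, J_eq y hy,
    J_eq _ (convex_Icc 0 1 hx hy hu.le hv.le huv), mix_comb]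
  simp only [smul_eq_mul] at key ⊢
  linear_combination key + phi cH * huv

theorem landauer_minimum_general (cL cH p m : ℝ)
    (hcL : 0 < cL) (hLH : cL < cH)
    (hp : p ∈ Set.Ioo (0 : ℝ) 1) (hm : m ∈ Set.Ioo (0 : ℝ) 1) :
    (m < p → (p / m) * J cL cH m > J cL cH p) ∧
    (m > p → ((1 - p) / (1 - m)) * J cL cH m > J cL cH p) ∧
    (m = p → (p / m) * J cL cH m = J cL cH p) := by
  obtain ⟨hp0, hp1⟩ := hp
  obtain ⟨hm0, hm1⟩ := hm
  have hJ := strictConcaveOn_J hcL.le (hcL.trans hLH).le hLH.ne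
  have hpI : p ∈ Icc (0 : ℝ) 1 := ⟨hp0.le, hp1.le⟩
  have hmI : m ∈ Icc (0 : ℝ) 1 := ⟨hm0.le, hm1.le⟩
  refine ⟨fun hmp ↦ ?_, fun hpm ↦ ?_, fun hmp ↦ ?_⟩
  · have slope := hJ.secant_strict_mono (left_mem_Icc.2 zero_le_one) hmI hpI hm0.ne' hp0.ne' hmp
    simp only [J_zero, sub_zero] at slope
    rw [div_lt_div_iff₀ hp0 hm0] at slope
    rw [div_mul_eq_mul_div, gt_iff_lt, lt_div_iff₀ hm0]
    linarith
  · have slope := hJ.secant_strict_mono (right_mem_Icc.2 zero_le_one) hpI hmI hp1.ne hm1.ne hpm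
    simp only [J_one, sub_zero] at slope
    rw [← neg_div_neg_eq, neg_sub, ← neg_div_neg_eq (J cL cH p), neg_sub,
      div_lt_div_iff₀ (by linarith) (by linarith)] at slope
    rw [div_mul_eq_mul_div, gt_iff_lt, lt_div_iff₀ (by linarith)]
    linarith
  · rw [hmp, div_self hp0.ne', one_mul]

/-- Theorem 1 of the paper: the normalized energy-per-information ratio is
minimized exactly at m = p (Landauer bound is achieved at m = p). -/
theorem landauer_minimum (cL cH p m : ℝ)
    (hcL : 0 < cL) (hLH : cL < cH) (hcH : cH < 1)
    (hp : p ∈ Set.Ioo (0 : ℝ) 1) (hm : m ∈ Set.Ioo (0 : ℝ) 1) :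
    (m < p → (p / m) * J cL cH m > J cL cH p) ∧
    (m > p → ((1 - p) / (1 - m)) * J cL cH m > J cL cH p) ∧
    (m = p → (p / m) * J cL cH m = J cL cH p) :=
  landauer_minimum_general cL cH p m hcL hLH hp hm
end

section
/- Let 0 < c_L < c_H < 1. Then the function p ↦ J(c_L, c_H, p)/(1−p) is strictly increasing on the interval (0, 1): for all 0 < p₁ < p₂ < 1, J(c_L, c_H, p₁)/(1−p₁) < J(c_L, c_H, p₂)/(1−p₂). -/
open Set

lemma StrictConvexOn.strictMonoOn_slope {s : Set ℝ} {f : ℝ → ℝ} {a : ℝ}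
    (hf : StrictConvexOn ℝ s f) (ha : a ∈ s) : StrictMonoOn (slope f a) (s \ {a}) := by
  intro x hx y hy hxy
  simpa only [slope_fun_def_field] using
    hf.secant_strict_mono ha hx.1 hy.1 hx.2 hy.2 hxy

noncomputable def jensenGap (f : ℝ → ℝ) (a b p : ℝ) : ℝ :=
  p * f a + (1 - p) * f b - f (p * a + (1 - p) * b)

lemma jensenGap_div_one_sub (f : ℝ → ℝ) (a b : ℝ) {p : ℝ} (hp : p ≠ 1) :
    jensenGap f a b p / (1 - p) = f b - f a - (b - a) * slope f a (p * a + (1 - p) * b) := by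
  have hq : 1 - p ≠ 0 := sub_ne_zero.mpr hp.symm
  rcases eq_or_ne a b with rfl | hab
  · simp [jensenGap, ← add_mul]
  have hba : b - a ≠ 0 := sub_ne_zero.mpr hab.symm
  rw [slope_def_field, show p * a + (1 - p) * b - a = (1 - p) * (b - a) by ring, jensenGap]
  field_simp
  ring

/-- The normalised Jensen gap grows because its slope term is a secant slope of `f` from `a`
to a point sliding towards `a` as `p` increases. -/
theorem StrictConvexOn.strictMonoOn_jensenGap_div_one_sub {s : Set ℝ} {f : ℝ → ℝ} {a b : ℝ}
    (hf : StrictConvexOn ℝ s f) (ha : a ∈ s) (hb : b ∈ s) (hab : a < b) :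
    StrictMonoOn (fun p ↦ jensenGap f a b p / (1 - p)) (Ico 0 1) := by
  have hmem : ∀ p ∈ Ico (0 : ℝ) 1, p * a + (1 - p) * b ∈ s \ {a} := fun p hp ↦
    ⟨by simpa only [smul_eq_mul] using
        hf.1 ha hb hp.1 (sub_nonneg.mpr hp.2.le) (add_sub_cancel p 1),
      (show a < p * a + (1 - p) * b by nlinarith [hp.2]).ne'⟩
  intro p₁ hp₁ p₂ hp₂ h12
  have hslope : slope f a (p₂ * a + (1 - p₂) * b) < slope f a (p₁ * a + (1 - p₁) * b) :=
    hf.strictMonoOn_slope ha (hmem p₂ hp₂) (hmem p₁ hp₁) (by nlinarith)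
  simp only [jensenGap_div_one_sub f a b hp₁.2.ne, jensenGap_div_one_sub f a b hp₂.2.ne]
  linarith [mul_lt_mul_of_pos_left hslope (sub_pos.mpr hab)]

lemma strictConvexOn_phi : StrictConvexOn ℝ (Ici 0) phi :=
  Real.strictConvexOn_mul_log.congr fun x hx ↦ by
    rcases (mem_Ici.mp hx).eq_or_lt with rfl | hx
    · simp [phi]
    · simp [phi, hx]

theorem J_div_one_sub_p_strictMono_general (cL cH : ℝ)
    (hcL : 0 < cL) (hLH : cL < cH) :
    ∀ p₁ p₂ : ℝ, 0 < p₁ → p₁ < p₂ → p₂ < 1 →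
      J cL cH p₁ / (1 - p₁) < J cL cH p₂ / (1 - p₂) := fun _ _ h1 h12 h2 ↦
  strictConvexOn_phi.strictMonoOn_jensenGap_div_one_sub hcL.le (hcL.trans hLH).le hLH
    ⟨h1.le, h12.trans h2⟩ ⟨(h1.trans h12).le, h2⟩ h12

/-- The function p ↦ J(c_L, c_H, p)/(1−p) is strictly increasing on (0, 1). -/
theorem J_div_one_sub_p_strictMono (cL cH : ℝ)
    (hcL : 0 < cL) (hLH : cL < cH) (hcH : cH < 1) :
    ∀ p₁ p₂ : ℝ, 0 < p₁ → p₁ < p₂ → p₂ < 1 →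
      J cL cH p₁ / (1 - p₁) < J cL cH p₂ / (1 - p₂) :=
  J_div_one_sub_p_strictMono_general cL cH hcL hLH
end

section
/- Let 0 < c_L < c_H < 1 and p ∈ (0, 1), let J'(p) denote the derivative of p ↦ J(c_L, c_H, p) at p, and set x = p·(1 − c_L/c_H), so that 0 < x < 1. Then p·J'(p) − J(c_L, c_H, p) = c_H·(x + log(1 − x)), and in particular p·J'(p) − J(c_L, c_H, p) < 0. Consequently the derivative of p ↦ J(c_L, c_H, p)/p at p, which equals (p·J'(p) − J(c_L, c_H, p))/p², is strictly negative. -/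
/-
With m = p·c_L + (1−p)·c_H and J' = φ(c_L) − φ(c_H) − (c_L − c_H)(log m + 1), the φ(c_L) terms of
p·J' − J cancel and m log m + p(c_H − c_L) log m = c_H log m, leaving
p·J' − J = c_H log(m / c_H) + p(c_H − c_L) = c_H (x + log(1 − x)), since m / c_H = 1 − x.
This is negative by log y < y − 1 for y = 1 − x ≠ 1.
-/

open Real

lemma hasDerivAt_phi {y : ℝ} (hy : 0 < y) : HasDerivAt phi (log y + 1) y :=
  (hasDerivAt_mul_log hy.ne').congr_of_eventuallyEq <|
    (eventually_gt_nhds hy).mono fun _ hz => if_pos hz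

lemma hasDerivAt_J {cL cH p : ℝ} (hm : 0 < p * cL + (1 - p) * cH) :
    HasDerivAt (fun q => J cL cH q)
      (phi cL - phi cH - (cL - cH) * (log (p * cL + (1 - p) * cH) + 1)) p := by
  have hline (c : ℝ) : HasDerivAt (fun q : ℝ => (1 - q) * c) (-c) p := by
    simpa using ((hasDerivAt_id' p).const_sub 1).mul_const c
  have hmix : HasDerivAt (fun q => q * cL + (1 - q) * cH) (cL - cH) p :=
    (((hasDerivAt_id' p).mul_const cL).add (hline cH)).congr_deriv (by ring)
  have hphi := (hasDerivAt_phi hm).comp p hmix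
  exact ((((hasDerivAt_id' p).mul_const (phi cL)).add (hline (phi cH))).sub hphi).congr_deriv
    (by ring)

lemma mul_deriv_J_sub_J {cL cH p : ℝ} (hcL : 0 < cL) (hcH : 0 < cH)
    (hm : 0 < p * cL + (1 - p) * cH) :
    p * deriv (fun q => J cL cH q) p - J cL cH p
      = cH * (p * (1 - cL / cH) + log (1 - p * (1 - cL / cH))) := by
  have hmix : 1 - p * (1 - cL / cH) = (p * cL + (1 - p) * cH) / cH := by
    field_simp
    ring
  rw [(hasDerivAt_J hm).deriv, hmix, log_div hm.ne' hcH.ne']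
  simp only [J, phi, if_pos hcL, if_pos hcH, if_pos hm]
  field_simp
  ring

lemma add_log_one_sub_neg {x : ℝ} (hx0 : x ≠ 0) (hx1 : x < 1) : x + log (1 - x) < 0 := by
  have := log_lt_sub_one_of_pos (sub_pos.2 hx1) (by simpa [sub_eq_self] using hx0)
  linarith

lemma deriv_div_id {f : ℝ → ℝ} {f' p : ℝ} (hf : HasDerivAt f f' p) (hp : p ≠ 0) :
    deriv (fun q => f q / q) p = (p * deriv f p - f p) / p ^ 2 := by
  rw [(hf.fun_div (hasDerivAt_id' p) hp).deriv, hf.deriv]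
  ring

theorem J_div_p_deriv_neg_general (cL cH p x : ℝ)
    (hcL : 0 < cL) (hLH : cL < cH)
    (hp : p ∈ Set.Ioo (0 : ℝ) 1)
    (hx : x = p * (1 - cL / cH)) :
    0 < x ∧ x < 1 ∧
    p * deriv (fun q => J cL cH q) p - J cL cH p = cH * (x + Real.log (1 - x)) ∧
    p * deriv (fun q => J cL cH q) p - J cL cH p < 0 ∧
    deriv (fun q => J cL cH q / q) p
      = (p * deriv (fun q => J cL cH q) p - J cL cH p) / p ^ 2 ∧
    deriv (fun q => J cL cH q / q) p < 0 := by
  obtain ⟨hp0, hp1⟩ := hp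
  have hcH : 0 < cH := hcL.trans hLH
  have hratio0 : 0 < cL / cH := div_pos hcL hcH
  have hratio1 : cL / cH < 1 := (div_lt_one hcH).2 hLH
  have hm : 0 < p * cL + (1 - p) * cH := by nlinarith
  have hx0 : 0 < x := hx ▸ mul_pos hp0 (sub_pos.2 hratio1)
  have hx1 : x < 1 := by rw [hx]; nlinarith
  have hnum := hx ▸ mul_deriv_J_sub_J hcL hcH hm
  have hneg : p * deriv (fun q => J cL cH q) p - J cL cH p < 0 :=
    hnum ▸ mul_neg_of_pos_of_neg hcH (add_log_one_sub_neg hx0.ne' hx1)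
  have hdiv := deriv_div_id (hasDerivAt_J hm) hp0.ne'
  exact ⟨hx0, hx1, hnum, hneg, hdiv, hdiv ▸ div_neg_of_neg_of_pos hneg (by positivity)⟩

/-- With x = p·(1 − c_L/c_H) ∈ (0,1), the numerator p·J'(p) − J(p) of the
derivative of J(p)/p equals c_H·(x + log(1−x)) and is strictly negative; hence
the derivative of p ↦ J(p)/p, which equals (p·J'(p) − J(p))/p², is negative. -/
theorem J_div_p_deriv_neg (cL cH p x : ℝ)
    (hcL : 0 < cL) (hLH : cL < cH) (hcH : cH < 1)
    (hp : p ∈ Set.Ioo (0 : ℝ) 1)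
    (hx : x = p * (1 - cL / cH)) :
    0 < x ∧ x < 1 ∧
    p * deriv (fun q => J cL cH q) p - J cL cH p = cH * (x + Real.log (1 - x)) ∧
    p * deriv (fun q => J cL cH q) p - J cL cH p < 0 ∧
    deriv (fun q => J cL cH q / q) p
      = (p * deriv (fun q => J cL cH q) p - J cL cH p) / p ^ 2 ∧
    deriv (fun q => J cL cH q / q) p < 0 :=
  J_div_p_deriv_neg_general cL cH p x hcL hLH hp hx
end

section
/- Let 0 < c_L < c_H < 1 and let n_L, n_H > 0 be real numbers, and set c = (n_L·c_L + n_H·c_H)/(n_L + n_H). Then the free-energy integral evaluates in closed form: ∫_{0}^{c_H − c} log((c + χ)/(c − (n_H/n_L)·χ)) dχ = −(1 + n_L/n_H)·c·log c + c_H·log c_H + (n_L/n_H)·c_L·log c_L. (Note that the integrand is well defined on the interval of integration since c − (n_H/n_L)·χ ≥ c_L > 0 for 0 ≤ χ ≤ c_H − c.) -/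
/-!
Off the two zeros of the affine factors (a null set), `log ((c + χ) / (c - r χ))` splits as
`log (c + χ) - log (c - r χ)`, and each piece is `∫ log` over an affine image of `[0, c_H - c]`,
given by `∫ log = x log x - x`. With `r = n_H / n_L`, the choice of `c` makes the image
endpoint `c - r (c_H - c)` equal to `c_L`, and the linear terms cancel.
-/

open Real MeasureTheory intervalIntegral

theorem intervalIntegrable_log_add (a t : ℝ) :
    IntervalIntegrable (fun χ => log (a + χ)) volume 0 t := by
  simpa using (intervalIntegrable_log' (a := a) (b := a + t)).comp_add_left a

theorem intervalIntegrable_log_sub_mul {r : ℝ} (hr : r ≠ 0) (a t : ℝ) :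
    IntervalIntegrable (fun χ => log (a - r * χ)) volume 0 t := by
  simpa [hr] using
    ((intervalIntegrable_log' (a := a) (b := a - r * t)).comp_sub_left a).comp_mul_left (c := r)

theorem integral_log_add (a t : ℝ) :
    ∫ χ in (0 : ℝ)..t, log (a + χ) = (a + t) * log (a + t) - a * log a - t := by
  rw [integral_comp_add_left, integral_log, add_zero]
  ring

theorem integral_log_sub_mul {r : ℝ} (hr : r ≠ 0) (a t : ℝ) :
    ∫ χ in (0 : ℝ)..t, log (a - r * χ)
      = (a * log a - (a - r * t) * log (a - r * t)) / r - t := by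
  rw [integral_comp_sub_mul _ hr, integral_log, mul_zero, sub_zero, smul_eq_mul]
  field_simp
  ring

theorem log_div_ae_eq_sub {r : ℝ} (hr : r ≠ 0) (a : ℝ) :
    ∀ᵐ χ ∂volume, log ((a + χ) / (a - r * χ)) = log (a + χ) - log (a - r * χ) := by
  have hnull : volume ({-a, a / r} : Set ℝ) = 0 := (Set.toFinite _).measure_zero _
  filter_upwards [measure_eq_zero_iff_ae_notMem.mp hnull] with χ hχ
  simp only [Set.mem_insert_iff, Set.mem_singleton_iff, not_or] at hχ
  refine log_div ?_ ?_
  · intro h; exact hχ.1 (by linarith)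
  · intro h; exact hχ.2 (by field_simp; linarith)

theorem integral_log_div_affine {r : ℝ} (hr : r ≠ 0) (a t : ℝ) :
    ∫ χ in (0 : ℝ)..t, log ((a + χ) / (a - r * χ))
      = (a + t) * log (a + t) - a * log a - (a * log a - (a - r * t) * log (a - r * t)) / r := by
  rw [integral_congr_ae ((log_div_ae_eq_sub hr a).mono fun _ h _ => h),
    integral_sub (intervalIntegrable_log_add a t) (intervalIntegrable_log_sub_mul hr a t),
    integral_log_add, integral_log_sub_mul hr]
  ring

theorem free_energy_integral_general (cL cH nL nH c : ℝ)
    (hnL : 0 < nL) (hnH : 0 < nH)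
    (hc : c = (nL * cL + nH * cH) / (nL + nH)) :
    ∫ χ in (0 : ℝ)..(cH - c), Real.log ((c + χ) / (c - (nH / nL) * χ))
      = -(1 + nL / nH) * c * Real.log c + cH * Real.log cH
        + (nL / nH) * (cL * Real.log cL) := by
  have hcL : c - nH / nL * (cH - c) = cL := by
    rw [hc]; field_simp; ring
  rw [integral_log_div_affine (div_pos hnH hnL).ne', hcL, add_sub_cancel]
  field_simp
  ring

/-- Closed form of the free-energy integral (eqn (19) of the paper):
∫₀^{c_H−c} log((c+χ)/(c − (n_H/n_L)χ)) dχ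
  = −(1 + n_L/n_H)·c·log c + c_H·log c_H + (n_L/n_H)·c_L·log c_L,
where c = (n_L c_L + n_H c_H)/(n_L + n_H). -/
theorem free_energy_integral (cL cH nL nH c : ℝ)
    (hcL : 0 < cL) (hLH : cL < cH) (hcH : cH < 1)
    (hnL : 0 < nL) (hnH : 0 < nH)
    (hc : c = (nL * cL + nH * cH) / (nL + nH)) :
    ∫ χ in (0 : ℝ)..(cH - c), Real.log ((c + χ) / (c - (nH / nL) * χ))
      = -(1 + nL / nH) * c * Real.log c + cH * Real.log cH
        + (nL / nH) * (cL * Real.log cL) :=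
  free_energy_integral_general cL cH nL nH c hnL hnH hc
end
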